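/- Let (Ω, 𝓕, P) be a probability space and let Y : Ω × [0,1] → ℝ be jointly measurable such that for every ω, the path t ↦ Y(ω,t) is càdlàg with Y(ω,0) = Y(ω,1) = 0. For u ∈ (0,1) let θ_u Y denote the cyclically shifted process (θ_u Y)(t) = Y((t+u) mod 1) − Y(u). Assume: (a) for every u ∈ (0,1), θ_u Y has the same finite-dimensional distributions as Y (i.e., for all k and all t₁,…,t_k ∈ [0,1], the random vectors ((θ_u Y)(t₁),…,(θ_u Y)(t_k)) and (Y(t₁),…,Y(t_k)) have the same law); (b) almost surely, Y has a unique infimum point, i.e. there is exactly one ρ ∈ [0,1] with min(Y(ρ−), Y(ρ)) = inf_{s∈[0,1]} Y(s). Let ρ_Y(ω) = inf{ t > 0 : min(Y(ω,t−), Y(ω,t)) = inf_{s∈[0,1]} Y(ω,s) } and let V(Y) denote the Vervaat transform, V(Y)(t) = Y((ρ_Y + t) mod 1) − min(Y(ρ_Y−), Y(ρ_Y)) for t ∈ [0,1). Then ρ_Y is uniformly distributed on [0,1], and ρ_Y is independent of V(Y): for every k, all t₁,…,t_k ∈ [0,1), every bounded Borel f : [0,1] → ℝ and every bounded Borel g :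 ℝ^k → ℝ, E[ f(ρ_Y) · g(V(Y)(t₁),…,V(Y)(t_k)) ] = (∫₀¹ f(u) du) · E[ g(V(Y)(t₁),…,V(Y)(t_k)) ]. -/

import Mathlib

open Filter Topology MeasureTheory

/-- Left-limit value of a path on `[0,1]`, with the convention `x(0−) = x(0)`. -/
noncomputable def leftVal (x : ℝ → ℝ) (t : ℝ) : ℝ :=
  if t ≤ 0 then x 0 else limUnder (nhdsWithin t (Set.Iio t)) x

/-- `x : [0,1] → ℝ` is càdlàg: right-continuous on `[0,1)`, left limits on `(0,1]`. -/
def Cadlag (x : ℝ → ℝ) : Prop :=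
  (∀ t ∈ Set.Ico (0 : ℝ) 1, ContinuousWithinAt x (Set.Ici t) t) ∧
  (∀ t ∈ Set.Ioc (0 : ℝ) 1, ∃ L, Filter.Tendsto x (nhdsWithin t (Set.Iio t)) (nhds L))

/-- The infimum of a path over `[0,1]`. -/
noncomputable def runMin01 (y : ℝ → ℝ) : ℝ := ⨅ s : Set.Icc (0 : ℝ) 1, y (s : ℝ)

/-- The first infimum point `ρ_y = inf{t > 0 : min(y(t−), y(t)) = inf_{[0,1]} y}`. -/
noncomputable def infPt (y : ℝ → ℝ) : ℝ :=
  sInf {t : ℝ | 0 < t ∧ min (leftVal y t) (y t) = runMin01 y}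

/-- The Vervaat transform at the splitting point `ρ`:
`V(y)(t) = y((ρ+t) mod 1) − min(y(ρ−), y(ρ))` for `t ∈ [0,1)`. -/
noncomputable def vervaatAux (y : ℝ → ℝ) (ρ : ℝ) (t : ℝ) : ℝ :=
  (if ρ + t ≤ 1 then y (ρ + t) else y (ρ + t - 1)) - min (leftVal y ρ) (y ρ)


/-!
The cyclic shift `θ_u` moves the infimum point `ρ` to `(ρ - u) mod 1` and leaves the Vervaat
transform unchanged, as long as `ρ ≠ u`. Since `θ_u Y` has the law of `Y`, for all but countably
many `u ∈ (0, 1)` the pair `(ρ, V)` has the law of `((ρ - u) mod 1, V)`. Averaging over `u` and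
exchanging the integrals (Fubini) gives `E[f(ρ) g(V)] = (∫₀¹ f) · E[g(V)]`.

The hypothesis only controls finite-dimensional distributions, so `ρ` and `V` are rebuilt as
measurable functionals of the values of `Y` at rational times. This uses right-continuity, and
that a càdlàg path attains its infimum over `[0, a]` (possibly only as a left limit), so that
`ρ ≤ a` exactly when the infimum over `[0, a]` is the global one.
-/
open Set

variable {y : ℝ → ℝ} {u : ℝ}

lemma leftVal_zero (y : ℝ → ℝ) : leftVal y 0 = y 0 := if_pos le_rfl

lemma leftVal_eq_of_tendsto {t L : ℝ} (ht : 0 < t) (h : Tendsto y (𝓝[<] t) (𝓝 L)) :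
    leftVal y t = L := by
  rw [leftVal, if_neg ht.not_ge]
  exact h.limUnder_eq

lemma runMin01_eq_sInf (y : ℝ → ℝ) : runMin01 y = sInf (y '' Icc 0 1) := by
  rw [runMin01, iInf, image_eq_range]

namespace Cadlag

lemma tendsto_leftVal (hy : Cadlag y) {t : ℝ} (ht : t ∈ Ioc 0 1) :
    Tendsto y (𝓝[<] t) (𝓝 (leftVal y t)) := by
  obtain ⟨L, hL⟩ := hy.2 t ht
  rwa [leftVal_eq_of_tendsto ht.1 hL]

lemma continuousWithinAt_Icc (hy : Cadlag y) {t : ℝ} (ht : t ∈ Icc 0 1) :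
    ContinuousWithinAt y (Icc t 1) t := by
  rcases ht.2.lt_or_eq with ht1 | rfl
  · exact (hy.1 t ⟨ht.1, ht1⟩).mono Icc_subset_Ici_self
  · simp [continuousWithinAt_singleton]

lemma le_leftVal (hy : Cadlag y) {t c : ℝ} (ht : t ∈ Ioc 0 1) (h : ∀ s ∈ Ioo 0 t, c ≤ y s) :
    c ≤ leftVal y t :=
  ge_of_tendsto (hy.tendsto_leftVal ht)
    (eventually_of_mem (Ioo_mem_nhdsLT ht.1) h)

lemma exists_subseq_tendsto (hy : Cadlag y) {a : ℝ} (ha : a ≤ 1) {s : ℕ → ℝ}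
    (hs : ∀ n, s n ∈ Icc 0 a) :
    ∃ σ ∈ Icc 0 a, ∃ φ : ℕ → ℕ, StrictMono φ ∧
      (Tendsto (y ∘ s ∘ φ) atTop (𝓝 (y σ)) ∨ Tendsto (y ∘ s ∘ φ) atTop (𝓝 (leftVal y σ))) := by
  obtain ⟨σ, hσ, φ, hφ, hlim⟩ := tendsto_subseq_of_bounded (Metric.isBounded_Icc 0 a) hs
  rw [isClosed_Icc.closure_eq] at hσ
  by_cases hright : ∃ᶠ k in atTop, σ ≤ s (φ k)
  · obtain ⟨ψ, hψ, hge⟩ := extraction_of_frequently_atTop hright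
    refine ⟨σ, hσ, φ ∘ ψ, hφ.comp hψ, Or.inl ?_⟩
    have hmem : ∀ k, s (φ (ψ k)) ∈ Icc σ 1 := fun k => ⟨hge k, (hs _).2.trans ha⟩
    exact (hy.continuousWithinAt_Icc ⟨hσ.1, hσ.2.trans ha⟩).tendsto.comp
      (tendsto_nhdsWithin_iff.2 ⟨hlim.comp hψ.tendsto_atTop, .of_forall hmem⟩)
  · have hleft : ∀ᶠ k in atTop, s (φ k) < σ := by simpa using not_frequently.1 hright
    have hσ0 : 0 < σ := (hs _).1.trans_lt hleft.exists.choose_spec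
    exact ⟨σ, hσ, φ, hφ, Or.inr <| (hy.tendsto_leftVal ⟨hσ0, hσ.2.trans ha⟩).comp
      (tendsto_nhdsWithin_iff.2 ⟨hlim, hleft⟩)⟩

lemma bddBelow_image (hy : Cadlag y) : BddBelow (y '' Icc 0 1) := by
  by_contra hb
  rw [not_bddBelow_iff] at hb
  choose s hs hlt using fun n : ℕ => exists_mem_image.1 (hb (-n))
  obtain ⟨σ, -, φ, hφ, hlim⟩ := hy.exists_subseq_tendsto le_rfl hs
  have hbot : Tendsto (y ∘ s ∘ φ) atTop atBot :=
    tendsto_atBot_mono (fun k => (hlt (φ k)).le)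
      (tendsto_neg_atBot_iff.2 (tendsto_natCast_atTop_atTop.comp hφ.tendsto_atTop))
  rcases hlim with h | h <;> exact not_tendsto_atBot_of_tendsto_nhds h hbot

lemma runMin01_le (hy : Cadlag y) {t : ℝ} (ht : t ∈ Icc 0 1) : runMin01 y ≤ y t := by
  rw [runMin01_eq_sInf]
  exact csInf_le hy.bddBelow_image (mem_image_of_mem y ht)

lemma runMin01_le_leftVal (hy : Cadlag y) {t : ℝ} (ht : t ∈ Icc 0 1) :
    runMin01 y ≤ leftVal y t := by
  rcases ht.1.eq_or_lt with rfl | ht0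
  · rw [leftVal_zero]; exact hy.runMin01_le ht
  · exact hy.le_leftVal ⟨ht0, ht.2⟩ fun s hs => hy.runMin01_le ⟨hs.1.le, hs.2.le.trans ht.2⟩

lemma exists_min_eq_sInf (hy : Cadlag y) {a : ℝ} (ha : a ∈ Icc 0 1) :
    ∃ σ ∈ Icc 0 a, min (leftVal y σ) (y σ) = sInf (y '' Icc 0 a) := by
  set c := sInf (y '' Icc 0 a)
  have hne : (y '' Icc 0 a).Nonempty := (nonempty_Icc.2 ha.1).image y
  have hbdd : BddBelow (y '' Icc 0 a) :=
    hy.bddBelow_image.mono (image_mono (Icc_subset_Icc_right ha.2))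
  have hlb : ∀ t ∈ Icc 0 a, c ≤ y t := fun t ht => csInf_le hbdd (mem_image_of_mem y ht)
  choose s hs hlt using fun n : ℕ => exists_mem_image.1 <|
    exists_lt_of_csInf_lt hne (lt_add_of_pos_right c (Nat.one_div_pos_of_nat (n := n)))
  obtain ⟨σ, hσ, φ, hφ, hlim⟩ := hy.exists_subseq_tendsto ha.2 hs
  have hc : Tendsto (y ∘ s ∘ φ) atTop (𝓝 c) := by
    refine tendsto_of_tendsto_of_tendsto_of_le_of_le tendsto_const_nhds ?_
      (fun k => hlb _ (hs (φ k))) (fun k => (hlt (φ k)).le)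
    simpa using (tendsto_const_nhds (x := c)).add
      (tendsto_one_div_add_atTop_nhds_zero_nat.comp hφ.tendsto_atTop)
  refine ⟨σ, hσ, ?_⟩
  rcases hlim with h | h
  · rw [tendsto_nhds_unique h hc]
    refine min_eq_right ?_
    rcases hσ.1.eq_or_lt with rfl | hσ0
    · rw [leftVal_zero]; exact hlb 0 hσ
    · exact hy.le_leftVal ⟨hσ0, hσ.2.trans ha.2⟩ fun t ht => hlb t ⟨ht.1.le, ht.2.le.trans hσ.2⟩
  · rw [tendsto_nhds_unique h hc]
    exact min_eq_left (hlb σ hσ)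

end Cadlag

def IsInfPoint (y : ℝ → ℝ) (t : ℝ) : Prop :=
  t ∈ Icc (0 : ℝ) 1 ∧ min (leftVal y t) (y t) = runMin01 y

lemma Cadlag.isInfPoint_of_eq (hy : Cadlag y) {t : ℝ} (ht : t ∈ Icc 0 1)
    (h : y t = runMin01 y) : IsInfPoint y t :=
  ⟨ht, by rw [h]; exact min_eq_right (hy.runMin01_le_leftVal ht)⟩

structure IsUniqueMinBridge (y : ℝ → ℝ) : Prop where
  cadlag : Cadlag y
  map_zero : y 0 = 0
  map_one : y 1 = 0
  existsUnique_isInfPoint : ∃! ρ, IsInfPoint y ρ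

namespace IsUniqueMinBridge

lemma eq_of_isInfPoint (hy : IsUniqueMinBridge y) {s t : ℝ} (hs : IsInfPoint y s)
    (ht : IsInfPoint y t) : s = t :=
  hy.existsUnique_isInfPoint.unique hs ht

lemma runMin01_lt_zero (hy : IsUniqueMinBridge y) : runMin01 y < 0 := by
  refine (hy.map_zero ▸ hy.cadlag.runMin01_le ⟨le_rfl, zero_le_one⟩).lt_of_ne fun h => ?_
  have h0 := hy.cadlag.isInfPoint_of_eq ⟨le_rfl, zero_le_one⟩ (hy.map_zero.trans h.symm)
  have h1 := hy.cadlag.isInfPoint_of_eq ⟨zero_le_one, le_rfl⟩ (hy.map_one.trans h.symm)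
  exact zero_ne_one (hy.eq_of_isInfPoint h0 h1)

lemma pos_of_isInfPoint (hy : IsUniqueMinBridge y) {t : ℝ} (ht : IsInfPoint y t) : 0 < t := by
  refine ht.1.1.lt_of_ne fun h0 => hy.runMin01_lt_zero.ne ?_
  rw [← ht.2, ← h0, leftVal_zero, min_self, hy.map_zero]

lemma infPt_eq (hy : IsUniqueMinBridge y) {ρ : ℝ} (hρ : IsInfPoint y ρ) : infPt y = ρ := by
  have hmem : ρ ∈ {t : ℝ | 0 < t ∧ min (leftVal y t) (y t) = runMin01 y} :=
    ⟨hy.pos_of_isInfPoint hρ, hρ.2⟩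
  refine le_antisymm (csInf_le ⟨0, fun t ht => ht.1.le⟩ hmem) (le_csInf ⟨ρ, hmem⟩ ?_)
  rintro t ⟨ht0, ht⟩
  rcases le_or_gt t 1 with ht1 | ht1
  · exact (hy.eq_of_isInfPoint hρ ⟨⟨ht0.le, ht1⟩, ht⟩).le
  · exact hρ.1.2.trans ht1.le

lemma isInfPoint_infPt (hy : IsUniqueMinBridge y) : IsInfPoint y (infPt y) := by
  obtain ⟨ρ, hρ, -⟩ := hy.existsUnique_isInfPoint
  rwa [hy.infPt_eq hρ]

lemma infPt_mem_Ioc (hy : IsUniqueMinBridge y) : infPt y ∈ Ioc 0 1 :=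
  ⟨hy.pos_of_isInfPoint hy.isInfPoint_infPt, hy.isInfPoint_infPt.1.2⟩

end IsUniqueMinBridge

/-- `s mod 1` for `s ∈ (0, 2]`, with representative in `(0, 1]`. -/
noncomputable def cyclicPos (s : ℝ) : ℝ := if s ≤ 1 then s else s - 1

lemma cyclicPos_of_le {s : ℝ} (h : s ≤ 1) : cyclicPos s = s := if_pos h

lemma cyclicPos_of_lt {s : ℝ} (h : 1 < s) : cyclicPos s = s - 1 := if_neg h.not_ge

lemma cyclicPos_mem_Ioc {s : ℝ} (hs : s ∈ Ioc 0 2) : cyclicPos s ∈ Ioc 0 1 := by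
  unfold cyclicPos; split_ifs <;> constructor <;> linarith [hs.1, hs.2]

lemma comp_cyclicPos_of_one_le (h01 : y 0 = y 1) {s : ℝ} (hs : 1 ≤ s) :
    y (cyclicPos s) = y (s - 1) := by
  rcases hs.eq_or_lt with rfl | hs
  · rw [cyclicPos_of_le le_rfl, sub_self, h01]
  · rw [cyclicPos_of_lt hs]

lemma vervaatAux_eq (y : ℝ → ℝ) (ρ t : ℝ) :
    vervaatAux y ρ t = y (cyclicPos (ρ + t)) - min (leftVal y ρ) (y ρ) := by
  rw [vervaatAux, cyclicPos, apply_ite y]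

lemma Cadlag.continuousWithinAt_comp_cyclicPos (hy : Cadlag y) (h01 : y 0 = y 1) {s : ℝ}
    (hs : s ∈ Ico 0 2) : ContinuousWithinAt (y ∘ cyclicPos) (Ici s) s := by
  rcases lt_or_ge s 1 with hs1 | hs1
  · refine (hy.1 s ⟨hs.1, hs1⟩).congr_of_eventuallyEq ?_ (by simp [cyclicPos_of_le hs1.le])
    filter_upwards [mem_nhdsWithin_of_mem_nhds (Iic_mem_nhds hs1)] with t ht
    simp [cyclicPos_of_le ht]
  · have hsub : ContinuousWithinAt (fun t => y (t - 1)) (Ici s) s :=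
      ContinuousWithinAt.comp (f := fun t => t - 1) (hy.1 (s - 1) ⟨by linarith, by linarith [hs.2]⟩)
        (continuous_sub_right 1).continuousWithinAt fun t (ht : s ≤ t) => sub_le_sub_right ht 1
    exact hsub.congr (fun t ht => comp_cyclicPos_of_one_le h01 (hs1.trans ht))
      (comp_cyclicPos_of_one_le h01 hs1)

lemma Cadlag.tendsto_comp_cyclicPos_left (hy : Cadlag y) {s : ℝ} (hs : s ∈ Ioc 0 2) :
    Tendsto (y ∘ cyclicPos) (𝓝[<] s) (𝓝 (leftVal y (cyclicPos s))) := by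
  rcases le_or_gt s 1 with hs1 | hs1
  · rw [cyclicPos_of_le hs1]
    refine (hy.tendsto_leftVal ⟨hs.1, hs1⟩).congr' ?_
    filter_upwards [self_mem_nhdsWithin] with t ht
    simp [cyclicPos_of_le ((le_of_lt ht).trans hs1)]
  · rw [cyclicPos_of_lt hs1]
    have hsub : Tendsto (· - 1) (𝓝[<] s) (𝓝[<] (s - 1)) :=
      (continuous_sub_right (1 : ℝ)).continuousWithinAt.tendsto_nhdsWithin
        fun t (ht : t < s) => sub_lt_sub_right ht 1
    refine ((hy.tendsto_leftVal ⟨by linarith, by linarith [hs.2]⟩).comp hsub).congr' ?_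
    filter_upwards [Ioo_mem_nhdsLT hs1] with t ht
    simp [cyclicPos_of_lt ht.1]

lemma cyclicPos_add_eq_iff {t ρ : ℝ} (hu : u ∈ Ioo 0 1) (ht : t ∈ Ioc 0 1)
    (hρ : ρ ∈ Ioc 0 1) : cyclicPos (t + u) = ρ ↔ t = cyclicPos (ρ + 1 - u) := by
  obtain ⟨hu0, hu1⟩ := hu; obtain ⟨ht0, ht1⟩ := ht; obtain ⟨hρ0, hρ1⟩ := hρ
  unfold cyclicPos; split_ifs <;> constructor <;> intro <;> linarith

lemma image_cyclicPos_add (hu : u ∈ Ioo 0 1) :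
    (fun t => cyclicPos (t + u)) '' Icc 0 1 = Ioc 0 1 := by
  refine Subset.antisymm ?_ fun s hs => ?_
  · rintro _ ⟨t, ht, rfl⟩
    exact cyclicPos_mem_Ioc ⟨by linarith [ht.1, hu.1], by linarith [ht.2, hu.2]⟩
  · have ht := cyclicPos_mem_Ioc (s := s + 1 - u)
      ⟨by linarith [hs.1, hu.2], by linarith [hs.2, hu.1]⟩
    exact ⟨_, Ioc_subset_Icc_self ht, (cyclicPos_add_eq_iff hu ht hs).2 rfl⟩

lemma image_Ioc_eq_image_Icc (h01 : y 0 = y 1) : y '' Ioc 0 1 = y '' Icc 0 1 := by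
  rw [← Ioc_insert_left zero_le_one, image_insert_eq, h01]
  exact (insert_eq_of_mem (mem_image_of_mem y (right_mem_Ioc.2 zero_lt_one))).symm

/-- The cyclic shift `θ_u y`. -/
noncomputable def cyclicShift (u : ℝ) (y : ℝ → ℝ) (t : ℝ) : ℝ := y (cyclicPos (t + u)) - y u

lemma cyclicShift_apply (t : ℝ) :
    cyclicShift u y t = (if t + u ≤ 1 then y (t + u) else y (t + u - 1)) - y u := by
  rw [cyclicShift, cyclicPos, apply_ite y]

lemma cyclicShift_zero (hu : u ∈ Ioo 0 1) : cyclicShift u y 0 = 0 := by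
  rw [cyclicShift, zero_add, cyclicPos_of_le hu.2.le, sub_self]

lemma cyclicShift_one (hu : u ∈ Ioo 0 1) : cyclicShift u y 1 = 0 := by
  rw [cyclicShift, cyclicPos_of_lt (by linarith [hu.1]), add_sub_cancel_left, sub_self]

lemma Cadlag.tendsto_cyclicShift_left (hy : Cadlag y) (hu : u ∈ Ioo 0 1) {t : ℝ}
    (ht : t ∈ Ioc 0 1) :
    Tendsto (cyclicShift u y) (𝓝[<] t) (𝓝 (leftVal y (cyclicPos (t + u)) - y u)) := by
  have hadd : Tendsto (· + u) (𝓝[<] t) (𝓝[<] (t + u)) :=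
    (continuous_add_const u).continuousWithinAt.tendsto_nhdsWithin
      fun s (hs : s < t) => add_lt_add_left hs u
  exact ((hy.tendsto_comp_cyclicPos_left ⟨by linarith [ht.1, hu.1], by linarith [ht.2, hu.2]⟩).comp
    hadd).sub tendsto_const_nhds

lemma Cadlag.cyclicShift (hy : Cadlag y) (h01 : y 0 = y 1) (hu : u ∈ Ioo 0 1) :
    Cadlag (cyclicShift u y) := by
  refine ⟨fun t ht => ?_, fun t ht => ⟨_, hy.tendsto_cyclicShift_left hu ht⟩⟩
  have hpos := hy.continuousWithinAt_comp_cyclicPos h01 (s := t + u)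
    ⟨by linarith [ht.1, hu.1], by linarith [ht.2, hu.2]⟩
  exact (ContinuousWithinAt.comp (f := (· + u)) hpos (continuous_add_const u).continuousWithinAt
    fun s (hs : t ≤ s) => add_le_add_left hs u).sub continuousWithinAt_const

lemma min_leftVal_cyclicShift (hy : Cadlag y) (hu : u ∈ Ioo 0 1) {t : ℝ} (ht : t ∈ Ioc 0 1) :
    min (leftVal (cyclicShift u y) t) (cyclicShift u y t) =
      min (leftVal y (cyclicPos (t + u))) (y (cyclicPos (t + u))) - y u := by
  rw [leftVal_eq_of_tendsto ht.1 (hy.tendsto_cyclicShift_left hu ht), cyclicShift,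
    min_sub_sub_right]

lemma runMin01_cyclicShift (hy : Cadlag y) (h01 : y 0 = y 1) (hu : u ∈ Ioo 0 1) :
    runMin01 (cyclicShift u y) = runMin01 y - y u := by
  have himage : cyclicShift u y '' Icc 0 1 = (· - y u) '' (y '' Icc 0 1) := by
    rw [← image_Ioc_eq_image_Icc h01, ← image_cyclicPos_add hu, image_image, image_image]
    rfl
  rw [runMin01_eq_sInf, runMin01_eq_sInf, himage]
  exact (Monotone.map_csInf_of_continuousAt (continuous_sub_right _).continuousAt
    (fun a b h => sub_le_sub_right h _) ((nonempty_Icc.2 zero_le_one).image y)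
    hy.bddBelow_image).symm

namespace IsUniqueMinBridge

lemma isInfPoint_cyclicShift_iff (hy : IsUniqueMinBridge y) (hu : u ∈ Ioo 0 1)
    (hρu : infPt y ≠ u) {t : ℝ} :
    IsInfPoint (cyclicShift u y) t ↔ t = cyclicPos (infPt y + 1 - u) := by
  have h01 : y 0 = y 1 := hy.map_zero.trans hy.map_one.symm
  have hρ := hy.infPt_mem_Ioc
  constructor
  · rintro ⟨ht, hmin⟩
    rw [runMin01_cyclicShift hy.cadlag h01 hu] at hmin
    rcases ht.1.eq_or_lt with rfl | ht0
    · -- time `0` of the shifted path is time `u` of `y`, an infimum point only if `u = ρ`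
      rw [leftVal_zero, min_self, cyclicShift_zero hu, eq_comm, sub_eq_zero] at hmin
      exact absurd (hy.infPt_eq (hy.cadlag.isInfPoint_of_eq ⟨hu.1.le, hu.2.le⟩ hmin.symm)) hρu
    · rw [min_leftVal_cyclicShift hy.cadlag hu ⟨ht0, ht.2⟩, sub_left_inj] at hmin
      have hs := cyclicPos_mem_Ioc (s := t + u)
        ⟨by linarith [hu.1], by linarith [ht.2, hu.2]⟩
      refine (cyclicPos_add_eq_iff hu ⟨ht0, ht.2⟩ hρ).1 ?_
      exact (hy.infPt_eq ⟨Ioc_subset_Icc_self hs, hmin⟩).symm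
  · rintro rfl
    have ht := cyclicPos_mem_Ioc (s := infPt y + 1 - u)
      ⟨by linarith [hρ.1, hu.2], by linarith [hρ.2, hu.1]⟩
    refine ⟨Ioc_subset_Icc_self ht, ?_⟩
    rw [min_leftVal_cyclicShift hy.cadlag hu ht, (cyclicPos_add_eq_iff hu ht hρ).2 rfl,
      hy.isInfPoint_infPt.2, runMin01_cyclicShift hy.cadlag h01 hu]

lemma cyclicShift (hy : IsUniqueMinBridge y) (hu : u ∈ Ioo 0 1) (hρu : infPt y ≠ u) :
    IsUniqueMinBridge (cyclicShift u y) where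
  cadlag := hy.cadlag.cyclicShift (hy.map_zero.trans hy.map_one.symm) hu
  map_zero := cyclicShift_zero hu
  map_one := cyclicShift_one hu
  existsUnique_isInfPoint :=
    ⟨_, (hy.isInfPoint_cyclicShift_iff hu hρu).2 rfl,
      fun _ ht => (hy.isInfPoint_cyclicShift_iff hu hρu).1 ht⟩

lemma infPt_cyclicShift (hy : IsUniqueMinBridge y) (hu : u ∈ Ioo 0 1) (hρu : infPt y ≠ u) :
    infPt (_root_.cyclicShift u y) = cyclicPos (infPt y + 1 - u) :=
  (hy.cyclicShift hu hρu).infPt_eq ((hy.isInfPoint_cyclicShift_iff hu hρu).2 rfl)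

lemma vervaatAux_cyclicShift (hy : IsUniqueMinBridge y) (hu : u ∈ Ioo 0 1)
    (hρu : infPt y ≠ u) {t : ℝ} (ht : t ∈ Ico 0 1) :
    vervaatAux (_root_.cyclicShift u y) (infPt (_root_.cyclicShift u y)) t =
      vervaatAux y (infPt y) t := by
  have hshift := hy.cyclicShift hu hρu
  rw [vervaatAux_eq, vervaatAux_eq, hshift.isInfPoint_infPt.2, hy.isInfPoint_infPt.2,
    runMin01_cyclicShift hy.cadlag (hy.map_zero.trans hy.map_one.symm) hu,
    hy.infPt_cyclicShift hu hρu, _root_.cyclicShift, sub_sub_sub_cancel_right]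
  obtain ⟨hρ0, hρ1⟩ := hy.infPt_mem_Ioc
  obtain ⟨hu0, hu1⟩ := hu
  obtain ⟨ht0, ht1⟩ := ht
  congr 2
  unfold cyclicPos
  split_ifs <;> linarith

end IsUniqueMinBridge

/-- Clamping to `[0, 1]` keeps every coordinate at a time where the finite-dimensional
distributions are controlled. -/
noncomputable def ratSkel (y : ℝ → ℝ) (q : ℚ) : ℝ := y (projIcc (0 : ℝ) 1 zero_le_one q)

noncomputable def skelInfTo (x : ℚ → ℝ) (a : ℚ) : ℝ := ⨅ q : Icc (0 : ℚ) a, x q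

/-- Rational times `q` at which the infimum is not yet reached contribute `1`, which is harmless
since `q = 1` always qualifies. -/
noncomputable def skelInfPt (x : ℚ → ℝ) : ℝ :=
  ⨅ q : Ioc (0 : ℚ) 1, if skelInfTo x q = skelInfTo x 1 then (q : ℝ) else 1

noncomputable def dyadicAbove (n : ℕ) (s : ℝ) : ℚ := ⌈s * 2 ^ n⌉ / 2 ^ n

noncomputable def skelEval (x : ℚ → ℝ) (s : ℝ) : ℝ :=
  liminf (fun n => x (dyadicAbove n s)) atTop

noncomputable def skelVervaat (t : ℝ) (x : ℚ → ℝ) : ℝ :=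
  skelEval x (cyclicPos (skelInfPt x + t)) - skelInfTo x 1

lemma ratSkel_of_mem {q : ℚ} (hq : (q : ℝ) ∈ Icc 0 1) : ratSkel y q = y q :=
  congrArg y (congrArg Subtype.val (projIcc_of_mem zero_le_one hq))

lemma Cadlag.le_of_forall_rat (hy : Cadlag y) {t b c : ℝ} (ht : t ∈ Ico 0 1) (htb : t < b)
    (h : ∀ q : ℚ, (q : ℝ) ∈ Ioo t b → c ≤ y q) : c ≤ y t := by
  by_contra! hc
  obtain ⟨v, hv, hsub⟩ := mem_nhdsGE_iff_exists_Ico_subset.1 (hy.1 t ht (Iio_mem_nhds hc))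
  obtain ⟨q, htq, hq⟩ := exists_rat_btwn (lt_min (mem_Ioi.1 hv) htb)
  exact (h q ⟨htq, hq.trans_le (min_le_right _ _)⟩).not_gt
    (hsub ⟨htq.le, hq.trans_le (min_le_left _ _)⟩)

lemma Cadlag.skelInfTo_ratSkel (hy : Cadlag y) {a : ℚ} (ha : (a : ℝ) ∈ Icc 0 1) :
    skelInfTo (ratSkel y) a = sInf (y '' Icc 0 a) := by
  have hcast : ∀ q : Icc (0 : ℚ) a, ((q : ℚ) : ℝ) ∈ Icc 0 (a : ℝ) := fun q =>
    ⟨by exact_mod_cast q.2.1, by exact_mod_cast q.2.2⟩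
  have hval : ∀ q : Icc (0 : ℚ) a, ratSkel y q = y q := fun q =>
    ratSkel_of_mem ⟨(hcast q).1, (hcast q).2.trans ha.2⟩
  have : Nonempty (Icc (0 : ℚ) a) := ⟨⟨0, le_rfl, by exact_mod_cast ha.1⟩⟩
  refine IsGLB.ciInf_eq ⟨?_, fun b hb => ?_⟩
  · rintro _ ⟨q, rfl⟩
    dsimp only
    rw [hval]
    exact csInf_le (hy.bddBelow_image.mono (image_mono (Icc_subset_Icc_right ha.2)))
      (mem_image_of_mem y (hcast q))
  · have hb' : ∀ q : ℚ, (q : ℝ) ∈ Icc 0 (a : ℝ) → b ≤ y q := fun q hq => by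
      have hq' : q ∈ Icc (0 : ℚ) a := ⟨by exact_mod_cast hq.1, by exact_mod_cast hq.2⟩
      simpa [hval ⟨q, hq'⟩] using hb ⟨⟨q, hq'⟩, rfl⟩
    refine le_csInf ((nonempty_Icc.2 ha.1).image y) ?_
    rintro _ ⟨t, ht, rfl⟩
    rcases ht.2.lt_or_eq with hta | rfl
    · exact hy.le_of_forall_rat ⟨ht.1, hta.trans_le ha.2⟩ hta
        fun q hq => hb' q ⟨ht.1.trans hq.1.le, hq.2.le⟩
    · exact hb' a ⟨ha.1, le_rfl⟩

lemma IsUniqueMinBridge.sInf_image_Icc_eq_iff (hy : IsUniqueMinBridge y) {a : ℝ}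
    (ha : a ∈ Icc 0 1) : sInf (y '' Icc 0 a) = runMin01 y ↔ infPt y ≤ a := by
  have hρ := hy.isInfPoint_infPt
  constructor
  · intro h
    obtain ⟨σ, hσ, hmin⟩ := hy.cadlag.exists_min_eq_sInf ha
    exact (hy.infPt_eq ⟨⟨hσ.1, hσ.2.trans ha.2⟩, hmin.trans h⟩).symm ▸ hσ.2
  · intro hρa
    have hbdd : BddBelow (y '' Icc 0 a) :=
      hy.cadlag.bddBelow_image.mono (image_mono (Icc_subset_Icc_right ha.2))
    have hle : ∀ t ∈ Icc 0 a, sInf (y '' Icc 0 a) ≤ y t := fun t ht =>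
      csInf_le hbdd (mem_image_of_mem y ht)
    refine le_antisymm ?_ ?_
    · rw [← hρ.2]
      refine le_min (hy.cadlag.le_leftVal hy.infPt_mem_Ioc fun t ht => ?_)
        (hle _ ⟨hρ.1.1, hρa⟩)
      exact hle t ⟨ht.1.le, ht.2.le.trans hρa⟩
    · rw [runMin01_eq_sInf]
      exact csInf_le_csInf hy.cadlag.bddBelow_image ((nonempty_Icc.2 ha.1).image y)
        (image_mono (Icc_subset_Icc_right ha.2))

lemma IsUniqueMinBridge.skelInfPt_ratSkel (hy : IsUniqueMinBridge y) :
    skelInfPt (ratSkel y) = infPt y := by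
  have hρ := hy.infPt_mem_Ioc
  have hterm : ∀ q : Ioc (0 : ℚ) 1, (if skelInfTo (ratSkel y) q = skelInfTo (ratSkel y) 1
      then (q : ℝ) else 1) = if infPt y ≤ q then (q : ℝ) else 1 := fun q => by
    have hq : ((q : ℚ) : ℝ) ∈ Icc 0 1 := ⟨by exact_mod_cast q.2.1.le, by exact_mod_cast q.2.2⟩
    rw [hy.cadlag.skelInfTo_ratSkel hq, hy.cadlag.skelInfTo_ratSkel (by simp),
      Rat.cast_one, ← runMin01_eq_sInf]
    exact if_congr (hy.sInf_image_Icc_eq_iff hq) rfl rfl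
  have : Nonempty (Ioc (0 : ℚ) 1) := ⟨⟨1, one_pos, le_rfl⟩⟩
  have hbdd : BddBelow (range fun q : Ioc (0 : ℚ) 1 => if infPt y ≤ q then (q : ℝ) else 1) :=
    ⟨0, by
      rintro _ ⟨q, rfl⟩
      dsimp only
      split_ifs <;> [exact_mod_cast q.2.1.le; exact zero_le_one]⟩
  simp only [skelInfPt, hterm]
  refine le_antisymm ?_ (le_ciInf fun q => ?_)
  · rcases hρ.2.lt_or_eq with hρ1 | hρ1
    · refine le_of_forall_gt_imp_ge_of_dense fun c hc => ?_
      obtain ⟨q, hρq, hqc⟩ := exists_rat_btwn (lt_min hc hρ1)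
      have hq : q ∈ Ioc (0 : ℚ) 1 := ⟨by exact_mod_cast hρ.1.trans hρq,
        by exact_mod_cast (hqc.trans_le (min_le_right _ _)).le⟩
      refine (ciInf_le hbdd ⟨q, hq⟩).trans ?_
      rw [if_pos hρq.le]
      exact (hqc.trans_le (min_le_left _ _)).le
    · refine (ciInf_le hbdd ⟨1, one_pos, le_rfl⟩).trans ?_
      simp [hρ1]
  · split_ifs with h
    · exact h
    · exact hρ.2

lemma le_dyadicAbove (n : ℕ) (s : ℝ) : s ≤ dyadicAbove n s := by
  rw [dyadicAbove, Rat.cast_div, Rat.cast_intCast, Rat.cast_pow, Rat.cast_ofNat,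
    le_div_iff₀ (by positivity)]
  exact Int.le_ceil _

lemma tendsto_dyadicAbove (s : ℝ) :
    Tendsto (fun n => (dyadicAbove n s : ℝ)) atTop (𝓝 s) := by
  have hlt : ∀ n : ℕ, (dyadicAbove n s : ℝ) ≤ s + (1 / 2) ^ n := fun n => by
    rw [dyadicAbove, Rat.cast_div, Rat.cast_intCast, Rat.cast_pow, Rat.cast_ofNat,
      div_le_iff₀ (by positivity), add_mul, one_div_pow, one_div_mul_cancel (by positivity)]
    exact (Int.ceil_lt_add_one _).le
  refine tendsto_of_tendsto_of_tendsto_of_le_of_le tendsto_const_nhds ?_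
    (le_dyadicAbove · s) hlt
  simpa using (tendsto_const_nhds (x := s)).add
    (tendsto_pow_atTop_nhds_zero_of_lt_one (by norm_num : (0 : ℝ) ≤ 1 / 2) (by norm_num))

lemma Cadlag.skelEval_ratSkel (hy : Cadlag y) {s : ℝ} (hs : s ∈ Icc 0 1) :
    skelEval (ratSkel y) s = y s := by
  have hproj : Tendsto (fun n => (projIcc (0 : ℝ) 1 zero_le_one (dyadicAbove n s) : ℝ)) atTop
      (𝓝[Icc s 1] s) := by
    refine tendsto_nhdsWithin_iff.2 ⟨?_, .of_forall fun n => ⟨?_, (projIcc _ _ _ _).2.2⟩⟩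
    · have := ((continuous_subtype_val.comp
        (continuous_projIcc (a := (0 : ℝ)) (b := 1) (h := zero_le_one))).tendsto s).comp
        (tendsto_dyadicAbove s)
      rwa [Function.comp_apply, projIcc_of_mem _ hs] at this
    · have := monotone_projIcc zero_le_one (le_dyadicAbove n s)
      rwa [projIcc_of_mem _ hs, ← Subtype.coe_le_coe] at this
  exact ((hy.continuousWithinAt_Icc hs).tendsto.comp hproj).liminf_eq

lemma IsUniqueMinBridge.skelVervaat_ratSkel (hy : IsUniqueMinBridge y) {t : ℝ}
    (ht : t ∈ Ico 0 1) : skelVervaat t (ratSkel y) = vervaatAux y (infPt y) t := by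
  have hρ := hy.infPt_mem_Ioc
  have hpos := cyclicPos_mem_Ioc (s := infPt y + t)
    ⟨by linarith [hρ.1, ht.1], by linarith [hρ.2, ht.2]⟩
  rw [skelVervaat, hy.skelInfPt_ratSkel, hy.cadlag.skelEval_ratSkel (Ioc_subset_Icc_self hpos),
    hy.cadlag.skelInfTo_ratSkel (by simp), Rat.cast_one, ← runMin01_eq_sInf,
    vervaatAux_eq, hy.isInfPoint_infPt.2]

lemma measurable_cyclicPos : Measurable cyclicPos :=
  Measurable.ite measurableSet_Iic measurable_id (measurable_id.sub_const 1)

lemma measurable_skelInfTo (a : ℚ) : Measurable fun x : ℚ → ℝ => skelInfTo x a :=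
  Measurable.iInf fun _ => measurable_pi_apply _

lemma measurable_skelInfPt : Measurable skelInfPt :=
  Measurable.iInf fun _ => Measurable.ite
    (measurableSet_eq_fun (measurable_skelInfTo _) (measurable_skelInfTo _))
    measurable_const measurable_const

lemma measurable_dyadicAbove (n : ℕ) : Measurable (dyadicAbove n) :=
  (Measurable.of_discrete (f := fun k : ℤ => (k : ℚ) / 2 ^ n)).comp
    (Int.measurable_ceil.comp (measurable_id.mul_const _))

lemma measurable_skelEval : Measurable fun p : (ℚ → ℝ) × ℝ => skelEval p.1 p.2 := by
  have heval : Measurable fun p : (ℚ → ℝ) × ℚ => p.1 p.2 :=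
    measurable_from_prod_countable_left fun q => measurable_pi_apply q
  exact Measurable.liminf fun n =>
    heval.comp (measurable_fst.prodMk ((measurable_dyadicAbove n).comp measurable_snd))

lemma measurable_skelVervaat (t : ℝ) : Measurable (skelVervaat t) :=
  (measurable_skelEval.comp (measurable_id.prodMk
    (measurable_cyclicPos.comp (measurable_skelInfPt.add_const t)))).sub (measurable_skelInfTo 1)

namespace IsUniqueMinBridge

lemma skelInfPt_ratSkel_cyclicShift (hy : IsUniqueMinBridge y) (hu : u ∈ Ioo 0 1)
    (hρu : infPt y ≠ u) :
    skelInfPt (ratSkel (_root_.cyclicShift u y)) = cyclicPos (skelInfPt (ratSkel y) + 1 - u) := by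
  rw [(hy.cyclicShift hu hρu).skelInfPt_ratSkel, hy.skelInfPt_ratSkel,
    hy.infPt_cyclicShift hu hρu]

lemma skelVervaat_ratSkel_cyclicShift (hy : IsUniqueMinBridge y) (hu : u ∈ Ioo 0 1)
    (hρu : infPt y ≠ u) {t : ℝ} (ht : t ∈ Ico 0 1) :
    skelVervaat t (ratSkel (_root_.cyclicShift u y)) = skelVervaat t (ratSkel y) := by
  rw [(hy.cyclicShift hu hρu).skelVervaat_ratSkel ht, hy.skelVervaat_ratSkel ht,
    hy.vervaatAux_cyclicShift hu hρu ht]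

end IsUniqueMinBridge

lemma intervalIntegrable_of_abs_le {f : ℝ → ℝ} (hf : Measurable f) {C : ℝ}
    (hC : ∀ v, |f v| ≤ C) (a b : ℝ) : IntervalIntegrable f volume a b :=
  ⟨Measure.integrableOn_of_bounded measure_Ioc_lt_top.ne hf.aestronglyMeasurable
      (ae_of_all _ hC),
    Measure.integrableOn_of_bounded measure_Ioc_lt_top.ne hf.aestronglyMeasurable
      (ae_of_all _ hC)⟩

lemma integral_comp_cyclicPos_sub {f : ℝ → ℝ} (hf : Measurable f) {C : ℝ}
    (hC : ∀ v, |f v| ≤ C) {r : ℝ} (hr : r ∈ Ioc 0 1) :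
    ∫ u in Ioo 0 1, f (cyclicPos (r + 1 - u)) = ∫ v in Icc 0 1, f v := by
  set F := fun u => f (cyclicPos (r + 1 - u))
  have hF : Measurable F := hf.comp (measurable_cyclicPos.comp (measurable_const.sub measurable_id))
  have hleft : ∫ u in (0)..r, F u = ∫ v in (0)..r, f v := by
    rw [intervalIntegral.integral_of_le hr.1.le, integral_Ioc_eq_integral_Ioo,
      setIntegral_congr_fun measurableSet_Ioo (g := fun u => f (r - u)) fun u hu => by
        simp only [F, cyclicPos_of_lt (by linarith [hu.2] : 1 < r + 1 - u)]; ring_nf,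
      ← integral_Ioc_eq_integral_Ioo, ← intervalIntegral.integral_of_le hr.1.le,
      intervalIntegral.integral_comp_sub_left, sub_self, sub_zero]
  have hright : ∫ u in r..1, F u = ∫ v in r..1, f v := by
    rw [intervalIntegral.integral_of_le hr.2, integral_Ioc_eq_integral_Ioo,
      setIntegral_congr_fun measurableSet_Ioo (g := fun u => f (r + 1 - u)) fun u hu => by
        simp only [F, cyclicPos_of_le (by linarith [hu.1] : r + 1 - u ≤ 1)],
      ← integral_Ioc_eq_integral_Ioo, ← intervalIntegral.integral_of_le hr.2,
      intervalIntegral.integral_comp_sub_left, add_sub_cancel_right, add_sub_cancel_left]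
  have hFint := intervalIntegrable_of_abs_le hF (fun _ => hC _)
  have hfint := intervalIntegrable_of_abs_le hf hC
  rw [← integral_Ioc_eq_integral_Ioo, ← intervalIntegral.integral_of_le zero_le_one,
    ← intervalIntegral.integral_add_adjacent_intervals (hFint 0 r) (hFint r 1), hleft, hright,
    intervalIntegral.integral_add_adjacent_intervals (hfint 0 r) (hfint r 1),
    intervalIntegral.integral_of_le zero_le_one, integral_Icc_eq_integral_Ioc]

section

variable {Ω : Type*} [MeasurableSpace Ω] {P : Measure Ω}

lemma integral_mul_eq_of_ae_cyclic_invariant [IsFiniteMeasure P] {R G : Ω → ℝ}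
    (hR : Measurable R) (hRmem : ∀ᵐ ω ∂P, R ω ∈ Ioc 0 1) (hG : Measurable G) {CG : ℝ}
    (hGC : ∀ ω, |G ω| ≤ CG)
    {f : ℝ → ℝ} (hf : Measurable f) {Cf : ℝ} (hfC : ∀ v, |f v| ≤ Cf)
    (hinv : ∀ᵐ u ∂volume.restrict (Ioo 0 1),
      ∫ ω, f (cyclicPos (R ω + 1 - u)) * G ω ∂P = ∫ ω, f (R ω) * G ω ∂P) :
    ∫ ω, f (R ω) * G ω ∂P = (∫ u in Icc 0 1, f u) * ∫ ω, G ω ∂P := by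
  have : IsFiniteMeasure (volume.restrict (Ioo (0 : ℝ) 1)) :=
    isFiniteMeasure_restrict.2 measure_Ioo_lt_top.ne
  have hJ : Integrable (Function.uncurry fun u ω => f (cyclicPos (R ω + 1 - u)) * G ω)
      ((volume.restrict (Ioo 0 1)).prod P) := by
    refine Integrable.of_bound ?_ (Cf * CG) (ae_of_all _ fun ⟨u, ω⟩ => ?_)
    · exact ((hf.comp (measurable_cyclicPos.comp (((hR.comp measurable_snd).add_const 1).sub
        measurable_fst))).mul (hG.comp measurable_snd)).aestronglyMeasurable
    · rw [Function.uncurry_apply_pair, Real.norm_eq_abs, abs_mul]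
      exact mul_le_mul (hfC _) (hGC _) (abs_nonneg _) ((abs_nonneg _).trans (hfC 0))
  calc ∫ ω, f (R ω) * G ω ∂P
      = ∫ u in Ioo 0 1, ∫ ω, f (cyclicPos (R ω + 1 - u)) * G ω ∂P := by
        rw [integral_congr_ae hinv, setIntegral_const, Real.volume_real_Ioo_of_le zero_le_one,
          sub_zero, one_smul]
    _ = ∫ ω, (∫ u in Ioo 0 1, f (cyclicPos (R ω + 1 - u)) * G ω) ∂P :=
        integral_integral_swap hJ
    _ = ∫ ω, (∫ u in Icc 0 1, f u) * G ω ∂P := by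
        refine integral_congr_ae (hRmem.mono fun ω hω => ?_)
        dsimp only
        rw [integral_mul_const, integral_comp_cyclicPos_sub hf hfC hω]
    _ = (∫ u in Icc 0 1, f u) * ∫ ω, G ω ∂P := integral_const_mul _ _

lemma measure_le_eq_ofReal_of_integral_eq [IsFiniteMeasure P] {ρ : Ω → ℝ} (hρ : AEMeasurable ρ P)
    (h : ∀ f : ℝ → ℝ, Measurable f → (∃ C, ∀ v, |f v| ≤ C) →
      ∫ ω, f (ρ ω) ∂P = ∫ u in Icc 0 1, f u) {a : ℝ} (ha : a ∈ Icc 0 1) :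
    P {ω | ρ ω ≤ a} = ENNReal.ofReal a := by
  have hind := h ((Iic a).indicator 1) (measurable_one.indicator measurableSet_Iic)
    ⟨1, fun v => by by_cases hv : v ∈ Iic a <;> simp [hv]⟩
  have hlhs : ∫ ω, (Iic a).indicator 1 (ρ ω) ∂P = P.real {ω | ρ ω ≤ a} := by
    have hcomp : (fun ω => (Iic a).indicator (1 : ℝ → ℝ) (ρ ω)) = {ω | ρ ω ≤ a}.indicator 1 := by
      ext ω; simp [indicator_apply]
    rw [hcomp, integral_indicator₀ (nullMeasurableSet_le hρ aemeasurable_const)]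
    simp
  have hrhs : ∫ u in Icc 0 1, (Iic a).indicator (1 : ℝ → ℝ) u = a := by
    have hset : Iic a ∩ Icc 0 1 = Icc 0 a :=
      Set.ext fun v => ⟨fun h => ⟨h.2.1, h.1⟩, fun h => ⟨h.2, h.1, h.2.trans ha.2⟩⟩
    rw [integral_indicator measurableSet_Iic, Measure.restrict_restrict measurableSet_Iic, hset]
    simp [Real.volume_real_Icc_of_le ha.1]
  rw [hlhs, hrhs] at hind
  rw [← ofReal_measureReal, hind]

lemma measurable_ratSkel {X : Ω → ℝ → ℝ} (hX : ∀ t, Measurable fun ω => X ω t) :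
    Measurable fun ω => ratSkel (X ω) :=
  measurable_pi_lambda _ fun _ => hX _

lemma map_ratSkel_eq_of_fdd [IsFiniteMeasure P] {X X' : Ω → ℝ → ℝ}
    (hX : ∀ t, Measurable fun ω => X ω t)
    (hX' : ∀ t, Measurable fun ω => X' ω t)
    (h : ∀ k (ts : Fin k → ℝ), (∀ i, ts i ∈ Icc 0 1) →
      P.map (fun ω i => X ω (ts i)) = P.map (fun ω i => X' ω (ts i))) :
    P.map (fun ω => ratSkel (X ω)) = P.map (fun ω => ratSkel (X' ω)) := by
  have hfin : ∀ (J : Finset ℚ) {Z : Ω → ℝ → ℝ}, (∀ t, Measurable fun ω => Z ω t) →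
      (P.map fun ω => ratSkel (Z ω)).map J.restrict =
        (P.map fun ω i => Z ω (projIcc (0 : ℝ) 1 zero_le_one (J.equivFin.symm i))).map
          fun v j => v (J.equivFin j) := by
    intro J Z hZ
    rw [Measure.map_map J.measurable_restrict (measurable_ratSkel hZ),
      Measure.map_map (measurable_pi_lambda _ fun _ => measurable_pi_apply _)
        (measurable_pi_lambda _ fun _ => hZ _)]
    congr 1
    ext ω j
    simp [ratSkel]
  refine IsProjectiveLimit.unique (P := fun J => (P.map fun ω => ratSkel (X ω)).map J.restrict)
    (fun J => rfl) fun J => ?_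
  dsimp only
  rw [hfin J hX', hfin J hX, h _ _ fun i => (projIcc _ _ _ _).2]

lemma integral_skelInfPt_cyclicShift_mul {Y : Ω → ℝ → ℝ} (hY : ∀ t, Measurable fun ω => Y ω t)
    (hbridge : ∀ᵐ ω ∂P, IsUniqueMinBridge (Y ω)) (hu : u ∈ Ioo 0 1)
    (hlaw : P.map (fun ω => ratSkel (cyclicShift u (Y ω))) = P.map (fun ω => ratSkel (Y ω)))
    (hρu : ∀ᵐ ω ∂P, infPt (Y ω) ≠ u) {k : ℕ} {ts : Fin k → ℝ} (hts : ∀ i, ts i ∈ Ico 0 1)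
    {f : ℝ → ℝ} (hf : Measurable f) {g : (Fin k → ℝ) → ℝ} (hg : Measurable g) :
    ∫ ω, f (cyclicPos (skelInfPt (ratSkel (Y ω)) + 1 - u)) *
        g (fun i => skelVervaat (ts i) (ratSkel (Y ω))) ∂P =
      ∫ ω, f (skelInfPt (ratSkel (Y ω))) * g (fun i => skelVervaat (ts i) (ratSkel (Y ω))) ∂P := by
  set Ψ : (ℚ → ℝ) → ℝ := fun x => f (skelInfPt x) * g fun i => skelVervaat (ts i) x
  have hΨ : Measurable Ψ := (hf.comp measurable_skelInfPt).mul
    (hg.comp (measurable_pi_lambda _ fun i => measurable_skelVervaat (ts i)))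
  have hpath : ∀ᵐ ω ∂P, Ψ (ratSkel (cyclicShift u (Y ω))) =
      f (cyclicPos (skelInfPt (ratSkel (Y ω)) + 1 - u)) *
        g (fun i => skelVervaat (ts i) (ratSkel (Y ω))) := by
    filter_upwards [hbridge, hρu] with ω hω hne
    simp only [Ψ, hω.skelInfPt_ratSkel_cyclicShift hu hne,
      hω.skelVervaat_ratSkel_cyclicShift hu hne (hts _)]
  rw [← integral_congr_ae hpath,
    ← integral_map (measurable_ratSkel (X := fun ω => cyclicShift u (Y ω))
      fun t => (hY _).sub (hY u)).aemeasurable hΨ.aestronglyMeasurable, hlaw,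
    integral_map (measurable_ratSkel hY).aemeasurable hΨ.aestronglyMeasurable]

theorem integral_infPt_mul_vervaatAux [IsFiniteMeasure P] {Y : Ω → ℝ → ℝ}
    (hY : ∀ t, Measurable fun ω => Y ω t)
    (hbridge : ∀ᵐ ω ∂P, IsUniqueMinBridge (Y ω))
    (hlaw : ∀ u ∈ Ioo (0 : ℝ) 1,
      P.map (fun ω => ratSkel (cyclicShift u (Y ω))) = P.map (fun ω => ratSkel (Y ω)))
    {k : ℕ} {ts : Fin k → ℝ} (hts : ∀ i, ts i ∈ Ico 0 1)
    {f : ℝ → ℝ} (hf : Measurable f) {Cf : ℝ} (hfC : ∀ v, |f v| ≤ Cf)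
    {g : (Fin k → ℝ) → ℝ} (hg : Measurable g) {Cg : ℝ} (hgC : ∀ v, |g v| ≤ Cg) :
    ∫ ω, f (infPt (Y ω)) * g (fun i => vervaatAux (Y ω) (infPt (Y ω)) (ts i)) ∂P =
      (∫ u in Icc 0 1, f u) * ∫ ω, g (fun i => vervaatAux (Y ω) (infPt (Y ω)) (ts i)) ∂P := by
  set R := fun ω => skelInfPt (ratSkel (Y ω))
  set G := fun ω => g fun i => skelVervaat (ts i) (ratSkel (Y ω))
  have hR : Measurable R := measurable_skelInfPt.comp (measurable_ratSkel hY)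
  have hRY : ∀ᵐ ω ∂P, R ω = infPt (Y ω) := hbridge.mono fun ω hω => hω.skelInfPt_ratSkel
  have hGY : ∀ᵐ ω ∂P, G ω = g fun i => vervaatAux (Y ω) (infPt (Y ω)) (ts i) :=
    hbridge.mono fun ω hω => congrArg g (funext fun i => hω.skelVervaat_ratSkel (hts i))
  have hlhs : ∫ ω, f (infPt (Y ω)) * g (fun i => vervaatAux (Y ω) (infPt (Y ω)) (ts i)) ∂P =
      ∫ ω, f (R ω) * G ω ∂P :=
    integral_congr_ae (by filter_upwards [hRY, hGY] with ω h1 h2; rw [h1, h2])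
  rw [hlhs, integral_congr_ae (hGY.mono fun ω h => h.symm)]
  refine integral_mul_eq_of_ae_cyclic_invariant hR ((hbridge.and hRY).mono fun ω h => ?_)
    (hg.comp (measurable_pi_lambda _ fun i => (measurable_skelVervaat (ts i)).comp
      (measurable_ratSkel hY))) (fun ω => hgC _) hf hfC ?_
  · rw [h.2]
    exact h.1.infPt_mem_Ioc
  · -- `R` has at most countably many atoms, and no `u` outside them is the infimum point
    filter_upwards [ae_restrict_mem measurableSet_Ioo, ae_restrict_of_ae
      ((Measure.countable_meas_level_set_pos (μ := P) hR).ae_notMem volume)] with u hu hRu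
    refine integral_skelInfPt_cyclicShift_mul hY hbridge hu (hlaw u hu) ?_ hts hf hg
    filter_upwards [hRY, measure_eq_zero_iff_ae_notMem.1 (nonpos_iff_eq_zero.1 (not_lt.1 hRu))]
      with ω hRω hne
    exact hRω ▸ hne

end

/-- If `Y` is a jointly measurable process with càdlàg paths vanishing at `0` and `1`,
whose cyclic shifts all have the same finite-dimensional distributions as `Y`, and which
a.s. has a unique infimum point, then `ρ_Y` is uniform on `[0,1]` and independent of the
Vervaat transform `V(Y)`. -/
theorem stmt15 {Ω : Type*} [MeasurableSpace Ω] (P : Measure Ω) [IsProbabilityMeasure P]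
    (Y : Ω → ℝ → ℝ)
    (hjm : Measurable (Function.uncurry Y))
    (hcad : ∀ ω, Cadlag (Y ω))
    (h01 : ∀ ω, Y ω 0 = 0 ∧ Y ω 1 = 0)
    (hshift : ∀ u ∈ Set.Ioo (0 : ℝ) 1, ∀ k : ℕ, ∀ ts : Fin k → ℝ,
      (∀ i, ts i ∈ Set.Icc (0 : ℝ) 1) →
      Measure.map (fun ω => fun i =>
          (if ts i + u ≤ 1 then Y ω (ts i + u) else Y ω (ts i + u - 1)) - Y ω u) P =
        Measure.map (fun ω => fun i => Y ω (ts i)) P)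
    (huniq : ∀ᵐ ω ∂P, ∃! ρ, ρ ∈ Set.Icc (0 : ℝ) 1 ∧
      min (leftVal (Y ω) ρ) (Y ω ρ) = runMin01 (Y ω)) :
    (∀ a ∈ Set.Icc (0 : ℝ) 1, P {ω | infPt (Y ω) ≤ a} = ENNReal.ofReal a) ∧
    (∀ k : ℕ, ∀ ts : Fin k → ℝ, (∀ i, ts i ∈ Set.Ico (0 : ℝ) 1) →
      ∀ f : ℝ → ℝ, Measurable f → (∃ C, ∀ v, |f v| ≤ C) →
      ∀ g : (Fin k → ℝ) → ℝ, Measurable g → (∃ C, ∀ v, |g v| ≤ C) →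
      ∫ ω, f (infPt (Y ω)) * g (fun i => vervaatAux (Y ω) (infPt (Y ω)) (ts i)) ∂P =
        (∫ u in Set.Icc (0 : ℝ) 1, f u) *
          ∫ ω, g (fun i => vervaatAux (Y ω) (infPt (Y ω)) (ts i)) ∂P) := by
  have hY : ∀ t, Measurable fun ω => Y ω t := fun t =>
    hjm.comp (measurable_id.prodMk measurable_const)
  have hbridge : ∀ᵐ ω ∂P, IsUniqueMinBridge (Y ω) :=
    huniq.mono fun ω h => ⟨hcad ω, (h01 ω).1, (h01 ω).2, h⟩
  have hlaw : ∀ u ∈ Ioo (0 : ℝ) 1,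
      P.map (fun ω => ratSkel (cyclicShift u (Y ω))) = P.map (fun ω => ratSkel (Y ω)) :=
    fun u hu => map_ratSkel_eq_of_fdd (fun t => (hY _).sub (hY u)) hY fun k ts hts => by
      simpa only [cyclicShift_apply] using hshift u hu k ts hts
  refine ⟨fun a ha => measure_le_eq_ofReal_of_integral_eq ?_ (fun f hf ⟨C, hC⟩ => ?_) ha,
    fun k ts hts f hf ⟨_, hfC⟩ g hg ⟨_, hgC⟩ =>
      integral_infPt_mul_vervaatAux hY hbridge hlaw hts hf hfC hg hgC⟩
  · exact (measurable_skelInfPt.comp (measurable_ratSkel hY)).aemeasurable.congr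
      (hbridge.mono fun ω h => h.skelInfPt_ratSkel)
  · simpa using integral_infPt_mul_vervaatAux hY hbridge hlaw (ts := Fin.elim0)
      (fun i => i.elim0) hf hC (g := fun _ => 1) measurable_const (Cg := 1) fun _ => by simp
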